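/- For every trace t ∈ M(A^{±1},I), the rewriting process that removes factors aa^{-1} (a ∈ A^{±1}) as long as possible is terminating and confluent; hence every trace has a unique irreducible normal form, and the map sending each element of the graph group G(A,I) to its irreducible representative is a bijection between G(A,I) and IRR(A^{±1},I). -/

import Mathlib

/-- The commutation relation on words generated by an independence relation. -/
def traceRel (A : Type) (I : A → A → Prop) : FreeMonoid A → FreeMonoid A → Prop :=
  fun x y => ∃ a b, I a b ∧ x = FreeMonoid.of a * FreeMonoid.of b ∧ y = FreeMonoid.of b * FreeMonoid.of a

/-- The trace congruence ≡_I. -/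
def traceCon (A : Type) (I : A → A → Prop) : Con (FreeMonoid A) := conGen (traceRel A I)

/-- The trace monoid M(A,I). -/
abbrev Trace (A : Type) (I : A → A → Prop) := (traceCon A I).Quotient

/-- The trace represented by a word. -/
def trc (A : Type) (I : A → A → Prop) (w : FreeMonoid A) : Trace A I := (traceCon A I).mk' w

/-- s I t: every letter of s is independent of every letter of t. -/
def TraceIndep (A : Type) (I : A → A → Prop) (s t : Trace A I) : Prop :=
  ∀ w w' : FreeMonoid A, s = trc A I w → t = trc A I w' →
    ∀ a ∈ w.toList, ∀ b ∈ w'.toList, I a b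

/-- A trace is connected if it has no nontrivial factorization into independent factors. -/
def TraceConnected (A : Type) (I : A → A → Prop) (t : Trace A I) : Prop :=
  ∀ u v : Trace A I, t = u * v → TraceIndep A I u v → u = 1 ∨ v = 1

/-- The set of prefixes of a trace. -/
def tracePrefixes (A : Type) (I : A → A → Prop) (t : Trace A I) : Set (Trace A I) :=
  {p | ∃ q, t = p * q}

/-- The independence relation extended to letters and their formal inverses:
`Sum.inl a` is the generator a, `Sum.inr a` its inverse a⁻¹. -/
def extI (A : Type) (I : A → A → Prop) : A ⊕ A → A ⊕ A → Prop :=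
  fun x y => I (Sum.elim id id x) (Sum.elim id id y)

/-- Traces over the alphabet A^{±1}. -/
abbrev GTrace (A : Type) (I : A → A → Prop) := Trace (A ⊕ A) (extI A I)

/-- The congruence on words over A^{±1} defining the graph group G(A,I):
commutations of independent letters and free cancellations a a⁻¹ = 1. -/
def ggCon (A : Type) (I : A → A → Prop) : Con (FreeMonoid (A ⊕ A)) :=
  conGen (fun x y => traceRel (A ⊕ A) (extI A I) x y ∨
    ∃ a : A ⊕ A, x = FreeMonoid.of a * FreeMonoid.of (Sum.swap a) ∧ y = 1)

/-- An irreducible trace: one containing no factor a a⁻¹. -/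
def IsIRR (A : Type) (I : A → A → Prop) (t : GTrace A I) : Prop :=
  ¬ ∃ (u v : GTrace A I) (a : A ⊕ A),
      t = u * trc (A ⊕ A) (extI A I)
            (FreeMonoid.of a * FreeMonoid.of (Sum.swap a)) * v

/-- The formal inverse of a word over A^{±1}. -/
def wordInv (A : Type) (w : FreeMonoid (A ⊕ A)) : FreeMonoid (A ⊕ A) :=
  FreeMonoid.ofList ((FreeMonoid.toList w).reverse.map Sum.swap)

/-- One rewriting step: remove a factor a a⁻¹ from a trace. -/
def RW (A : Type) (I : A → A → Prop) (t t' : GTrace A I) : Prop :=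
  ∃ (u v : GTrace A I) (a : A ⊕ A),
    t = u * trc (A ⊕ A) (extI A I)
          (FreeMonoid.of a * FreeMonoid.of (Sum.swap a)) * v ∧
    t' = u * v


/-!
Read a word from the right and insert its letters one at a time into a reduced word: a letter `a`
cancels against the first `a⁻¹` that it reaches through letters independent of `a`, and is
prepended otherwise. Up to commutations this insertion depends only on the trace it acts on,
insertions of independent letters commute, and inserting `a` right after `a⁻¹` is the identity on
reduced words. All three follow from the two possible effects of the insertion on traces,
`a⁻¹ · insertLetter a v ≡ v` when `a` cancels and `insertLetter a v ≡ a · v` otherwise, because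
the trace monoid is left cancellative. Hence the resulting normal form is an invariant of traces
that rewriting steps and the defining relations of `G(A,I)` preserve and that fixes irreducible
traces. Rewriting shortens traces, so every trace rewrites to an irreducible one, which must then
be its normal form.
-/

open FreeMonoid Relation

section Rewriting

variable {α β : Type*} {r : α → α → Prop}

theorem eq_of_reflTransGen_of_invariant (f : α → β) (hf : ∀ a b, r a b → f a = f b) {a b : α}
    (h : ReflTransGen r a b) : f a = f b := by
  induction h with
  | refl => rfl
  | tail _ hbc ih => exact ih.trans (hf _ _ hbc)

theorem reflTransGen_and_irreducible_of_invariant (f : α → α) (hwf : WellFounded (fun a b => r b a))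
    (hf : ∀ a b, r a b → f a = f b) (hfix : ∀ a, (∀ b, ¬ r a b) → f a = a) (a : α) :
    ReflTransGen r a (f a) ∧ ∀ b, ¬ r (f a) b := by
  induction a using hwf.induction with
  | _ a ih =>
    by_cases hred : ∃ b, r a b
    · obtain ⟨b, hab⟩ := hred
      rw [hf a b hab]
      exact ⟨(ih b hab).1.head hab, (ih b hab).2⟩
    · simp only [not_exists] at hred
      rw [hfix a hred]
      exact ⟨.refl, hred⟩

end Rewriting

theorem eq_of_conGen {M α : Type*} [Monoid M] {r : M → M → Prop} (f : M → α)
    (hf : ∀ x y u v, r u v → f (x * u * y) = f (x * v * y)) {a b : M} (h : conGen r a b) :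
    f a = f b := by
  let c : Con M :=
    { r := fun a b => ∀ x y, f (x * a * y) = f (x * b * y)
      iseqv := ⟨fun _ _ _ => rfl, fun h x y => (h x y).symm,
        fun h₁ h₂ x y => (h₁ x y).trans (h₂ x y)⟩
      mul' := fun {a b c d} h₁ h₂ x y =>
        calc f (x * (a * c) * y) = f (x * a * (c * y)) := by simp only [mul_assoc]
          _ = f (x * b * (c * y)) := h₁ _ _
          _ = f (x * b * c * y) := by simp only [mul_assoc]
          _ = f (x * b * d * y) := h₂ _ _
          _ = f (x * (b * d) * y) := by simp only [mul_assoc] }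
  simpa using (Con.conGen_le (c := c)).mpr (fun u v huv x y => hf x y u v huv) h 1 1

namespace Trace

variable {X : Type} {K : X → X → Prop}

def ofList (K : X → X → Prop) (w : List X) : Trace X K := trc X K (FreeMonoid.ofList w)

def letter (K : X → X → Prop) (a : X) : Trace X K := trc X K (FreeMonoid.of a)

theorem ofList_append (w w' : List X) : ofList K (w ++ w') = ofList K w * ofList K w' := by
  simp only [ofList, trc, FreeMonoid.ofList_append, map_mul]

theorem ofList_cons (a : X) (w : List X) : ofList K (a :: w) = letter K a * ofList K w := by
  simp only [ofList, letter, trc, FreeMonoid.ofList_cons, map_mul]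

theorem trc_of_mul_of (a b : X) : trc X K (of a * of b) = letter K a * letter K b :=
  map_mul _ _ _

theorem ofList_surjective : Function.Surjective (ofList K) := fun t =>
  let ⟨u, hu⟩ := Con.mk'_surjective t; ⟨u.toList, hu⟩

theorem letter_commute {a b : X} (h : K a b) : Commute (letter K a) (letter K b) := by
  simp only [Commute, SemiconjBy, letter, trc, ← map_mul]
  exact (Con.eq _).mpr (ConGen.Rel.of _ _ ⟨a, b, h, rfl, rfl⟩)

theorem ofList_swap {a b : X} (h : K a b) (x y : List X) :
    ofList K (x ++ a :: b :: y) = ofList K (x ++ b :: a :: y) := by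
  simp only [ofList_append, ofList_cons, (letter_commute h).left_comm]

theorem eq_of_ofList_eq {α : Type*} (f : List X → α)
    (hf : ∀ x y a b, K a b → f (x ++ a :: b :: y) = f (x ++ b :: a :: y)) {w w' : List X}
    (h : ofList K w = ofList K w') : f w = f w' :=
  eq_of_conGen (f ∘ FreeMonoid.toList)
    (by rintro x y _ _ ⟨a, b, hab, rfl, rfl⟩; simpa using hf x.toList y.toList a b hab)
    ((Con.eq _).mp h)

def length (t : Trace X K) : ℕ :=
  Con.liftOn t FreeMonoid.length fun _ _ h =>
    eq_of_ofList_eq List.length (by simp) ((Con.eq _).mpr h)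

@[simp]
theorem length_ofList (w : List X) : length (ofList K w) = w.length := rfl

theorem ofList_erase_swap [DecidableEq X] (e : X) {a b : X} (h : K a b) (x y : List X) :
    ofList K ((x ++ a :: b :: y).erase e) = ofList K ((x ++ b :: a :: y).erase e) := by
  induction x with
  | nil =>
    by_cases ha : a = e <;> by_cases hb : b = e
    · subst ha hb; rfl
    · subst ha; simp [hb]
    · subst hb; simp [ha]
    · simpa [ha, hb] using ofList_swap h [] (y.erase e)
  | cons c x ih =>
    by_cases hc : c = e
    · subst hc; simpa using ofList_swap h x y
    · simp [hc, ofList_cons, ih]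

theorem isLeftRegular_letter (a : X) : IsLeftRegular (letter K a) := by
  classical
  intro s t hst
  obtain ⟨w, rfl⟩ := ofList_surjective s
  obtain ⟨w', rfl⟩ := ofList_surjective t
  have h : ofList K (a :: w) = ofList K (a :: w') := by simpa [ofList_cons] using hst
  simpa using eq_of_ofList_eq (fun v => ofList K (v.erase a))
    (fun x y _ _ h => ofList_erase_swap a h x y) h

end Trace

namespace GTrace

variable {A : Type} {I : A → A → Prop}

local notation "τ" => Trace.ofList (extI A I)
local notation "ℓ" => Trace.letter (extI A I)

theorem extI_swap_left (a b : A ⊕ A) : extI A I a.swap b ↔ extI A I a b := by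
  cases a <;> rfl

theorem extI_swap_right (a b : A ⊕ A) : extI A I a b.swap ↔ extI A I a b := by
  cases b <;> rfl

theorem extI_swap_swap (a b : A ⊕ A) : extI A I a.swap b.swap ↔ extI A I a b := by
  rw [extI_swap_left, extI_swap_right]

theorem ne_swap_of_extI (hirr : ∀ a, ¬ I a a) {a b : A ⊕ A} (h : extI A I a b) : b ≠ a.swap := by
  rintro rfl
  cases a <;> exact hirr _ h

open Classical in
noncomputable def insertLetter (I : A → A → Prop) (a : A ⊕ A) : List (A ⊕ A) → List (A ⊕ A)
  | [] => [a]
  | b :: v =>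
    if b = a.swap then v else if extI A I a b then b :: insertLetter I a v else a :: b :: v

-- `Cancels I a v` says that `v = p ++ a⁻¹ :: q` with every letter of `p` independent of `a`.
def Cancels (I : A → A → Prop) (a : A ⊕ A) : List (A ⊕ A) → Prop
  | [] => False
  | b :: v => b = a.swap ∨ (extI A I a b ∧ Cancels I a v)

-- `HasRedex I w` says that `w` has a factor `e :: m ++ [e⁻¹]` with `m` independent of `e`.
def HasRedex (I : A → A → Prop) : List (A ⊕ A) → Prop
  | [] => False
  | b :: v => Cancels I b v ∨ HasRedex I v

noncomputable def normalize (I : A → A → Prop) (w : List (A ⊕ A)) : List (A ⊕ A) :=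
  w.foldr (insertLetter I) []

theorem cancels_cons_of_extI (hirr : ∀ a, ¬ I a a) {a b : A ⊕ A} (h : extI A I a b)
    (v : List (A ⊕ A)) : Cancels I a (b :: v) ↔ Cancels I a v := by
  simp [Cancels, h, ne_swap_of_extI hirr h]

theorem cancels_swap (hsym : ∀ a b, I a b → I b a) (e : A ⊕ A) {a b : A ⊕ A} (h : extI A I a b)
    (x y : List (A ⊕ A)) :
    Cancels I e (x ++ a :: b :: y) ↔ Cancels I e (x ++ b :: a :: y) := by
  induction x with
  | nil =>
    have hb : a = e.swap → extI A I e b := fun ha => by rwa [ha, extI_swap_left] at h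
    have ha : b = e.swap → extI A I e a := fun hb =>
      hsym _ _ (by rwa [hb, extI_swap_right] at h)
    simp only [List.nil_append, Cancels]
    constructor <;> rintro (h₁ | ⟨h₂, h₁ | ⟨h₃, hy⟩⟩)
    · exact Or.inr ⟨hb h₁, Or.inl h₁⟩
    · exact Or.inl h₁
    · exact Or.inr ⟨h₃, Or.inr ⟨h₂, hy⟩⟩
    · exact Or.inr ⟨ha h₁, Or.inl h₁⟩
    · exact Or.inl h₁
    · exact Or.inr ⟨h₃, Or.inr ⟨h₂, hy⟩⟩
  | cons c x ih => simp only [List.cons_append, Cancels, ih]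

theorem cancels_congr (hsym : ∀ a b, I a b → I b a) (e : A ⊕ A) {v v' : List (A ⊕ A)}
    (h : τ v = τ v') : Cancels I e v ↔ Cancels I e v' := by
  rw [Trace.eq_of_ofList_eq (Cancels I e)
    (fun x y _ _ hab => propext (cancels_swap hsym e hab x y)) h]

theorem hasRedex_swap (hirr : ∀ a, ¬ I a a) (hsym : ∀ a b, I a b → I b a) {a b : A ⊕ A}
    (h : extI A I a b) (x y : List (A ⊕ A)) :
    HasRedex I (x ++ a :: b :: y) ↔ HasRedex I (x ++ b :: a :: y) := by
  induction x with
  | nil =>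
    simp only [List.nil_append, HasRedex, cancels_cons_of_extI hirr h,
      cancels_cons_of_extI hirr (hsym _ _ h : extI A I b a)]
    tauto
  | cons c x ih => simp only [List.cons_append, HasRedex, cancels_swap hsym c h, ih]

theorem hasRedex_congr (hirr : ∀ a, ¬ I a a) (hsym : ∀ a b, I a b → I b a)
    {v v' : List (A ⊕ A)} (h : τ v = τ v') : HasRedex I v ↔ HasRedex I v' := by
  rw [Trace.eq_of_ofList_eq (HasRedex I)
    (fun x y _ _ hab => propext (hasRedex_swap hirr hsym hab x y)) h]

theorem ofList_swap_cons_insertLetter {a : A ⊕ A} {v : List (A ⊕ A)} (hv : Cancels I a v) :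
    τ (a.swap :: insertLetter I a v) = τ v := by
  induction v with
  | nil => exact hv.elim
  | cons b v ih =>
    simp only [insertLetter]
    split_ifs with hb hab
    · rw [hb]
    · have hv : Cancels I a v := (hv.resolve_left hb).2
      rw [Trace.ofList_cons, Trace.ofList_cons, (Trace.letter_commute
        ((extI_swap_left a b).mpr hab)).left_comm, ← Trace.ofList_cons, ih hv, Trace.ofList_cons]
    · exact absurd (hv.resolve_left hb).1 hab

theorem ofList_insertLetter_of_not_cancels {a : A ⊕ A} {v : List (A ⊕ A)} (hv : ¬ Cancels I a v) :
    τ (insertLetter I a v) = τ (a :: v) := by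
  induction v with
  | nil => rfl
  | cons b v ih =>
    simp only [Cancels, not_or, not_and] at hv
    simp only [insertLetter, if_neg hv.1]
    split_ifs with hab
    · rw [Trace.ofList_cons, ih (hv.2 hab), Trace.ofList_cons, Trace.ofList_cons,
        Trace.ofList_cons, (Trace.letter_commute hab).symm.left_comm]
    · rfl

theorem cancels_insertLetter_iff (hirr : ∀ a, ¬ I a a) (hsym : ∀ a b, I a b → I b a)
    {c d : A ⊕ A} (h : extI A I c d) (v : List (A ⊕ A)) :
    Cancels I c (insertLetter I d v) ↔ Cancels I c v := by
  by_cases hd : Cancels I d v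
  · rw [← cancels_congr hsym c (ofList_swap_cons_insertLetter hd),
      cancels_cons_of_extI hirr ((extI_swap_right c d).mpr h)]
  · rw [cancels_congr hsym c (ofList_insertLetter_of_not_cancels hd), cancels_cons_of_extI hirr h]

theorem insertLetter_congr (hsym : ∀ a b, I a b → I b a) (a : A ⊕ A) {v v' : List (A ⊕ A)}
    (h : τ v = τ v') : τ (insertLetter I a v) = τ (insertLetter I a v') := by
  by_cases hv : Cancels I a v
  · have hv' := (cancels_congr hsym a h).mp hv
    apply Trace.isLeftRegular_letter a.swap
    simp only [← Trace.ofList_cons, ofList_swap_cons_insertLetter hv,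
      ofList_swap_cons_insertLetter hv', h]
  · have hv' := (cancels_congr hsym a h).not.mp hv
    rw [ofList_insertLetter_of_not_cancels hv, ofList_insertLetter_of_not_cancels hv',
      Trace.ofList_cons, Trace.ofList_cons, h]

theorem insertLetter_comm (hirr : ∀ a, ¬ I a a) (hsym : ∀ a b, I a b → I b a) {c d : A ⊕ A}
    (h : extI A I c d) (v : List (A ⊕ A)) :
    τ (insertLetter I c (insertLetter I d v)) = τ (insertLetter I d (insertLetter I c v)) := by
  wlog H : Cancels I c v ∨ ¬ Cancels I d v generalizing c d
  · exact (this (hsym _ _ h) (Or.inl (not_not.mp (not_or.mp H).2))).symm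
  have hcd : ∀ v, Cancels I c (insertLetter I d v) ↔ Cancels I c v :=
    cancels_insertLetter_iff hirr hsym h
  have hdc : ∀ v, Cancels I d (insertLetter I c v) ↔ Cancels I d v :=
    cancels_insertLetter_iff hirr hsym (hsym _ _ h)
  by_cases hc : Cancels I c v <;> by_cases hd : Cancels I d v
  · have e₁ := ofList_swap_cons_insertLetter ((hcd v).mpr hc)
    have e₂ := ofList_swap_cons_insertLetter hd
    have e₃ := ofList_swap_cons_insertLetter ((hdc v).mpr hd)
    have e₄ := ofList_swap_cons_insertLetter hc
    simp only [Trace.ofList_cons] at e₁ e₂ e₃ e₄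
    apply Trace.isLeftRegular_letter d.swap
    apply Trace.isLeftRegular_letter c.swap
    dsimp only
    rw [(Trace.letter_commute ((extI_swap_swap c d).mpr h)).left_comm, e₁, e₂, ← e₄, ← e₃]
  · have e₁ := ofList_swap_cons_insertLetter ((hcd v).mpr hc)
    have e₂ := ofList_insertLetter_of_not_cancels hd
    have e₃ := ofList_insertLetter_of_not_cancels ((hdc v).not.mpr hd)
    have e₄ := ofList_swap_cons_insertLetter hc
    simp only [Trace.ofList_cons] at e₁ e₂ e₃ e₄
    apply Trace.isLeftRegular_letter c.swap
    dsimp only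
    rw [e₁, e₂, e₃, ← e₄, (Trace.letter_commute ((extI_swap_left c d).mpr h)).left_comm]
  · exact absurd H (by tauto)
  · rw [ofList_insertLetter_of_not_cancels ((hcd v).not.mpr hc),
      ofList_insertLetter_of_not_cancels ((hdc v).not.mpr hd), Trace.ofList_cons, Trace.ofList_cons,
      ofList_insertLetter_of_not_cancels hd, ofList_insertLetter_of_not_cancels hc,
      Trace.ofList_cons, Trace.ofList_cons, (Trace.letter_commute h).left_comm]

theorem not_hasRedex_insertLetter (hirr : ∀ a, ¬ I a a) (hsym : ∀ a b, I a b → I b a)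
    (a : A ⊕ A) {v : List (A ⊕ A)} (hv : ¬ HasRedex I v) : ¬ HasRedex I (insertLetter I a v) := by
  by_cases hc : Cancels I a v
  · rw [← hasRedex_congr hirr hsym (ofList_swap_cons_insertLetter hc)] at hv
    exact fun h => hv (Or.inr h)
  · rw [hasRedex_congr hirr hsym (ofList_insertLetter_of_not_cancels hc)]
    rintro (h | h)
    exacts [hc h, hv h]

theorem insertLetter_insertLetter_swap (hirr : ∀ a, ¬ I a a) (hsym : ∀ a b, I a b → I b a)
    (a : A ⊕ A) {v : List (A ⊕ A)} (hv : ¬ HasRedex I v) :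
    τ (insertLetter I a (insertLetter I a.swap v)) = τ v := by
  by_cases hc : Cancels I a.swap v
  · have hu := ofList_swap_cons_insertLetter hc
    rw [Sum.swap_swap] at hu
    have hnu : ¬ Cancels I a (insertLetter I a.swap v) := fun h =>
      hv ((hasRedex_congr hirr hsym hu).mp (Or.inl h))
    rw [ofList_insertLetter_of_not_cancels hnu, hu]
  · have hcu : Cancels I a (insertLetter I a.swap v) :=
      (cancels_congr hsym a (ofList_insertLetter_of_not_cancels hc)).mpr (Or.inl rfl)
    apply Trace.isLeftRegular_letter a.swap
    dsimp only
    rw [← Trace.ofList_cons, ofList_swap_cons_insertLetter hcu,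
      ofList_insertLetter_of_not_cancels hc, Trace.ofList_cons]

theorem not_hasRedex_normalize (hirr : ∀ a, ¬ I a a) (hsym : ∀ a b, I a b → I b a)
    (w : List (A ⊕ A)) : ¬ HasRedex I (normalize I w) := by
  induction w with
  | nil => exact id
  | cons a w ih => exact not_hasRedex_insertLetter hirr hsym a ih

theorem foldr_insertLetter_congr (hsym : ∀ a b, I a b → I b a) (x : List (A ⊕ A))
    {v v' : List (A ⊕ A)} (h : τ v = τ v') :
    τ (x.foldr (insertLetter I) v) = τ (x.foldr (insertLetter I) v') := by
  induction x with
  | nil => exact h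
  | cons a x ih => exact insertLetter_congr hsym a ih

theorem normalize_swap (hirr : ∀ a, ¬ I a a) (hsym : ∀ a b, I a b → I b a) {c d : A ⊕ A}
    (h : extI A I c d) (x y : List (A ⊕ A)) :
    τ (normalize I (x ++ c :: d :: y)) = τ (normalize I (x ++ d :: c :: y)) := by
  simp only [normalize, List.foldr_append]
  exact foldr_insertLetter_congr hsym x (insertLetter_comm hirr hsym h _)

theorem normalize_cancel (hirr : ∀ a, ¬ I a a) (hsym : ∀ a b, I a b → I b a)
    (x : List (A ⊕ A)) (a : A ⊕ A) (y : List (A ⊕ A)) :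
    τ (normalize I (x ++ a :: a.swap :: y)) = τ (normalize I (x ++ y)) := by
  simp only [normalize, List.foldr_append]
  exact foldr_insertLetter_congr hsym x
    (insertLetter_insertLetter_swap hirr hsym a (not_hasRedex_normalize hirr hsym y))

theorem normalize_of_not_hasRedex (hsym : ∀ a b, I a b → I b a) {w : List (A ⊕ A)}
    (hw : ¬ HasRedex I w) : τ (normalize I w) = τ w := by
  induction w with
  | nil => rfl
  | cons a w ih =>
    simp only [HasRedex, not_or] at hw
    have ih := ih hw.2
    rw [normalize, List.foldr_cons, ← normalize,
      ofList_insertLetter_of_not_cancels ((cancels_congr hsym a ih).not.mpr hw.1),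
      Trace.ofList_cons, ih, Trace.ofList_cons]

theorem exists_redex_of_hasRedex {w : List (A ⊕ A)} (hw : HasRedex I w) :
    ∃ (u v : GTrace A I) (a : A ⊕ A), τ w = u * trc (A ⊕ A) (extI A I) (of a * of a.swap) * v := by
  induction w with
  | nil => exact hw.elim
  | cons b w ih =>
    rcases hw with hb | hw
    · refine ⟨1, τ (insertLetter I b w), b, ?_⟩
      rw [Trace.ofList_cons, ← ofList_swap_cons_insertLetter hb, Trace.ofList_cons, one_mul,
        ← mul_assoc]
      rfl
    · obtain ⟨u, v, a, h⟩ := ih hw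
      exact ⟨ℓ b * u, v, a, by rw [Trace.ofList_cons, h, mul_assoc, mul_assoc, mul_assoc]⟩

theorem isIRR_iff_forall_not_RW (t : GTrace A I) : IsIRR A I t ↔ ∀ t', ¬ RW A I t t' :=
  ⟨fun h _ ⟨u, v, a, ht, _⟩ => h ⟨u, v, a, ht⟩, fun h ⟨u, v, a, ht⟩ => h _ ⟨u, v, a, ht, rfl⟩⟩

theorem exists_ofList_of_RW {t t' : GTrace A I} (h : RW A I t t') :
    ∃ x y a, t = τ (x ++ a :: a.swap :: y) ∧ t' = τ (x ++ y) := by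
  obtain ⟨u, v, a, rfl, rfl⟩ := h
  obtain ⟨x, rfl⟩ := Trace.ofList_surjective u
  obtain ⟨y, rfl⟩ := Trace.ofList_surjective v
  refine ⟨x, y, a, ?_, (Trace.ofList_append x y).symm⟩
  rw [Trace.ofList_append, Trace.ofList_cons, Trace.ofList_cons, Trace.trc_of_mul_of, mul_assoc,
    mul_assoc]

theorem wellFounded_RW : WellFounded (fun t t' : GTrace A I => RW A I t' t) := by
  refine Subrelation.wf (fun {t' t} h => ?_) (measure Trace.length).wf
  obtain ⟨x, y, a, rfl, rfl⟩ := exists_ofList_of_RW h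
  show Trace.length _ < Trace.length _
  simp

noncomputable def normalForm (I : A → A → Prop) (t : GTrace A I) : GTrace A I :=
  Trace.ofList (extI A I) (normalize I (Function.surjInv Trace.ofList_surjective t))

theorem normalForm_ofList (hirr : ∀ a, ¬ I a a) (hsym : ∀ a b, I a b → I b a)
    (w : List (A ⊕ A)) : normalForm I (τ w) = τ (normalize I w) :=
  Trace.eq_of_ofList_eq (fun w => τ (normalize I w))
    (fun x y _ _ h => normalize_swap hirr hsym h x y)
    (Function.surjInv_eq Trace.ofList_surjective _)

theorem normalForm_eq_of_RW (hirr : ∀ a, ¬ I a a) (hsym : ∀ a b, I a b → I b a)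
    {t t' : GTrace A I} (h : RW A I t t') : normalForm I t = normalForm I t' := by
  obtain ⟨x, y, a, rfl, rfl⟩ := exists_ofList_of_RW h
  rw [normalForm_ofList hirr hsym, normalForm_ofList hirr hsym, normalize_cancel hirr hsym]

theorem normalForm_eq_self (hirr : ∀ a, ¬ I a a) (hsym : ∀ a b, I a b → I b a)
    {t : GTrace A I} (ht : IsIRR A I t) : normalForm I t = t := by
  obtain ⟨w, rfl⟩ := Trace.ofList_surjective t
  rw [normalForm_ofList hirr hsym, normalize_of_not_hasRedex hsym (ht ∘ exists_redex_of_hasRedex)]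

theorem reflTransGen_normalForm_and_isIRR (hirr : ∀ a, ¬ I a a) (hsym : ∀ a b, I a b → I b a)
    (t : GTrace A I) : ReflTransGen (RW A I) t (normalForm I t) ∧ IsIRR A I (normalForm I t) := by
  rw [isIRR_iff_forall_not_RW]
  exact reflTransGen_and_irreducible_of_invariant _ wellFounded_RW
    (fun _ _ => normalForm_eq_of_RW hirr hsym)
    (fun t ht => normalForm_eq_self hirr hsym ((isIRR_iff_forall_not_RW t).mpr ht)) t

theorem normalForm_eq_of_reflTransGen (hirr : ∀ a, ¬ I a a) (hsym : ∀ a b, I a b → I b a)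
    {t s : GTrace A I} (h : ReflTransGen (RW A I) t s) : normalForm I t = normalForm I s :=
  eq_of_reflTransGen_of_invariant (normalForm I) (fun _ _ => normalForm_eq_of_RW hirr hsym) h

theorem join_of_reflTransGen (hirr : ∀ a, ¬ I a a) (hsym : ∀ a b, I a b → I b a)
    (t a b : GTrace A I) (ha : ReflTransGen (RW A I) t a) (hb : ReflTransGen (RW A I) t b) :
    ∃ c, ReflTransGen (RW A I) a c ∧ ReflTransGen (RW A I) b c :=
  ⟨normalForm I t,
    normalForm_eq_of_reflTransGen hirr hsym ha ▸ (reflTransGen_normalForm_and_isIRR hirr hsym a).1,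
    normalForm_eq_of_reflTransGen hirr hsym hb ▸ (reflTransGen_normalForm_and_isIRR hirr hsym b).1⟩

theorem existsUnique_reflTransGen_isIRR (hirr : ∀ a, ¬ I a a) (hsym : ∀ a b, I a b → I b a)
    (t : GTrace A I) : ∃! s : GTrace A I, ReflTransGen (RW A I) t s ∧ IsIRR A I s :=
  ⟨normalForm I t, reflTransGen_normalForm_and_isIRR hirr hsym t, fun _ ⟨hts, hs⟩ =>
    (normalForm_eq_self hirr hsym hs).symm.trans (normalForm_eq_of_reflTransGen hirr hsym hts).symm⟩

theorem traceCon_le_ggCon : traceCon (A ⊕ A) (extI A I) ≤ ggCon A I :=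
  Con.conGen_le.mpr fun _ _ h => ConGen.Rel.of _ _ (Or.inl h)

def toGraphGroup : GTrace A I →* (ggCon A I).Quotient :=
  (traceCon (A ⊕ A) (extI A I)).lift (ggCon A I).mk' fun _ _ h =>
    (Con.eq _).mpr (traceCon_le_ggCon h)

theorem toGraphGroup_trc (w : FreeMonoid (A ⊕ A)) :
    toGraphGroup (trc (A ⊕ A) (extI A I) w) = (ggCon A I).mk' w :=
  Con.lift_mk' _ _

theorem toGraphGroup_eq_of_RW {t t' : GTrace A I} (h : RW A I t t') :
    toGraphGroup t = toGraphGroup t' := by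
  obtain ⟨u, v, a, rfl, rfl⟩ := h
  have hcancel : (ggCon A I).mk' (of a * of a.swap) = 1 :=
    (Con.eq _).mpr (ConGen.Rel.of _ _ (Or.inr ⟨a, rfl, rfl⟩))
  rw [map_mul, map_mul, toGraphGroup_trc, hcancel, mul_one, map_mul]

theorem normalize_eq_of_ggCon (hirr : ∀ a, ¬ I a a) (hsym : ∀ a b, I a b → I b a)
    {u u' : FreeMonoid (A ⊕ A)} (h : ggCon A I u u') :
    τ (normalize I u.toList) = τ (normalize I u'.toList) := by
  refine eq_of_conGen (fun u => τ (normalize I u.toList)) ?_ h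
  rintro x y _ _ (⟨c, d, hcd, rfl, rfl⟩ | ⟨a, rfl, rfl⟩)
  · simpa using normalize_swap hirr hsym hcd x.toList y.toList
  · simpa using normalize_cancel hirr hsym x.toList a y.toList

theorem existsUnique_isIRR_representative (hirr : ∀ a, ¬ I a a) (hsym : ∀ a b, I a b → I b a)
    (g : (ggCon A I).Quotient) :
    ∃! t : GTrace A I, IsIRR A I t ∧
      ∃ w : FreeMonoid (A ⊕ A), t = trc (A ⊕ A) (extI A I) w ∧ g = (ggCon A I).mk' w := by
  obtain ⟨u, rfl⟩ := Con.mk'_surjective g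
  obtain ⟨w, hw⟩ := Con.mk'_surjective (normalForm I (trc (A ⊕ A) (extI A I) u))
  obtain ⟨hred, hirred⟩ := reflTransGen_normalForm_and_isIRR hirr hsym (trc (A ⊕ A) (extI A I) u)
  refine ⟨_, ⟨hirred, w, hw.symm, ?_⟩, ?_⟩
  · rw [← toGraphGroup_trc, ← toGraphGroup_trc]
    exact (eq_of_reflTransGen_of_invariant _ (fun _ _ => toGraphGroup_eq_of_RW) hred).trans
      (congrArg _ hw.symm)
  · rintro _ ⟨ht, w', rfl, hw'⟩
    calc trc (A ⊕ A) (extI A I) w' = normalForm I (τ w'.toList) :=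
          (normalForm_eq_self hirr hsym ht).symm
      _ = normalForm I (τ u.toList) := by
        rw [normalForm_ofList hirr hsym, normalForm_ofList hirr hsym,
          normalize_eq_of_ggCon hirr hsym ((Con.eq _).mp hw').symm]
      _ = _ := rfl

end GTrace

theorem rewriting_confluent_normal_forms_general (A : Type) (I : A → A → Prop)
    (hirr : ∀ a, ¬ I a a) (hsym : ∀ a b, I a b → I b a) :
    WellFounded (fun x y : GTrace A I => RW A I y x) ∧
    (∀ t a b : GTrace A I, Relation.ReflTransGen (RW A I) t a →
      Relation.ReflTransGen (RW A I) t b →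
      ∃ c, Relation.ReflTransGen (RW A I) a c ∧ Relation.ReflTransGen (RW A I) b c) ∧
    (∀ t : GTrace A I, ∃! nf : GTrace A I,
      Relation.ReflTransGen (RW A I) t nf ∧ IsIRR A I nf) ∧
    (∀ g : (ggCon A I).Quotient, ∃! t : GTrace A I, IsIRR A I t ∧
      ∃ w : FreeMonoid (A ⊕ A), t = trc (A ⊕ A) (extI A I) w ∧ g = (ggCon A I).mk' w) :=
  ⟨GTrace.wellFounded_RW, GTrace.join_of_reflTransGen hirr hsym,
    GTrace.existsUnique_reflTransGen_isIRR hirr hsym,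
    GTrace.existsUnique_isIRR_representative hirr hsym⟩

/-- The rewriting removing factors a a⁻¹ is terminating and confluent; every
trace has a unique irreducible normal form, and elements of the graph group
are in bijection with irreducible traces. -/
theorem rewriting_confluent_normal_forms (A : Type) [Fintype A] (I : A → A → Prop)
    (hirr : ∀ a, ¬ I a a) (hsym : ∀ a b, I a b → I b a) :
    WellFounded (fun x y : GTrace A I => RW A I y x) ∧
    (∀ t a b : GTrace A I, Relation.ReflTransGen (RW A I) t a →
      Relation.ReflTransGen (RW A I) t b →
      ∃ c, Relation.ReflTransGen (RW A I) a c ∧ Relation.ReflTransGen (RW A I) b c) ∧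
    (∀ t : GTrace A I, ∃! nf : GTrace A I,
      Relation.ReflTransGen (RW A I) t nf ∧ IsIRR A I nf) ∧
    (∀ g : (ggCon A I).Quotient, ∃! t : GTrace A I, IsIRR A I t ∧
      ∃ w : FreeMonoid (A ⊕ A), t = trc (A ⊕ A) (extI A I) w ∧ g = (ggCon A I).mk' w) :=
  rewriting_confluent_normal_forms_general A I hirr hsym
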